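/- arXiv:1706.08776 — 2 statements merged into one kernel-verified Lean document; each statement's English description precedes it below -/
import Mathlib

section
/- For every compact subset K of {z ∈ ℂ : |z| ≠ 1}, sup_{z ∈ K} |φ^{1,N}(z) − π^{−1} 𝟙_{|z|≤1}| → 0 as N → ∞; equivalently, sup_{z ∈ K} |e^{−N|z|²} e_N(N|z|²) − 𝟙_{|z|≤1}| → 0 as N → ∞. -/
open MeasureTheory Real Filter

/-- Truncated exponential series `e_N(t) = ∑_{ℓ=0}^{N-1} tˡ/ℓ!`. -/
noncomputable def eN (N : ℕ) (t : ℝ) : ℝ := ∑ ℓ ∈ Finset.range N, t ^ ℓ / (Nat.factorial ℓ)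

/-- One-particle marginal density `φ^{1,N}(z) = π⁻¹ e^{-N|z|²} e_N(N|z|²)`, `z ∈ ℂ`. -/
noncomputable def phi1C (N : ℕ) (z : ℂ) : ℝ :=
  (Real.pi)⁻¹ * Real.exp (-(N : ℝ) * ‖z‖ ^ 2) * eN N ((N : ℝ) * ‖z‖ ^ 2)

/-!
With `t = |z|²`, `e^{-Nt} e_N(Nt)` is the probability that a Poisson variable of mean `Nt` is
less than `N`. A Chernoff-type comparison bounds its distance to `𝟙_{t ≤ 1}` by `(t e^{1-t})^N`:
for `t ≤ 1`, `(Nt)^k ≤ t^N N^k` for every `k ≥ N`, so `e^{Nt} - e_N(Nt) ≤ t^N e^N`; for `t ≥ 1`,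
`(Nt)^k ≤ t^N N^k` for every `k < N`, so `e_N(Nt) ≤ t^N e^N`. Finally `t e^{1-t} < 1` for
`t ≠ 1`, and on a compact set avoiding the unit circle it stays below some `ρ < 1`.
-/

section TruncatedExp

variable {N : ℕ} {t x : ℝ}

lemma eN_nonneg (hx : 0 ≤ x) : 0 ≤ eN N x :=
  Finset.sum_nonneg fun _ _ => by positivity

lemma eN_le_exp (hx : 0 ≤ x) : eN N x ≤ exp x :=
  sum_le_exp_of_nonneg hx N

lemma hasSum_exp_sub_eN (N : ℕ) (x : ℝ) :
    HasSum (fun i => x ^ (i + N) / (i + N).factorial) (exp x - eN N x) :=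
  (hasSum_nat_add_iff' N).2 (by simpa [exp_eq_exp_ℝ] using NormedSpace.expSeries_div_hasSum_exp x)

lemma eN_mul_le_pow_mul (ht : 1 ≤ t) (hx : 0 ≤ x) : eN N (t * x) ≤ t ^ N * eN N x := by
  rw [eN, eN, Finset.mul_sum]
  refine Finset.sum_le_sum fun ℓ hℓ => ?_
  rw [mul_pow, mul_div_assoc]
  exact mul_le_mul_of_nonneg_right
    (pow_le_pow_right₀ ht (Finset.mem_range.1 hℓ).le) (by positivity)

lemma exp_sub_eN_mul_le_pow_mul (ht₀ : 0 ≤ t) (ht₁ : t ≤ 1) (hx : 0 ≤ x) :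
    exp (t * x) - eN N (t * x) ≤ t ^ N * (exp x - eN N x) := by
  refine hasSum_le (fun i => ?_) (hasSum_exp_sub_eN N (t * x))
    ((hasSum_exp_sub_eN N x).mul_left (t ^ N))
  rw [mul_pow, mul_div_assoc]
  exact mul_le_mul_of_nonneg_right
    (pow_le_pow_of_le_one ht₀ ht₁ (Nat.le_add_left N i)) (by positivity)

lemma exp_neg_mul_mul_pow_mul_exp (N : ℕ) (t : ℝ) :
    exp (-N * t) * (t ^ N * exp N) = (t * exp (1 - t)) ^ N := by
  rw [mul_pow, ← exp_nat_mul, mul_left_comm, ← exp_add]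
  ring_nf

lemma abs_exp_neg_mul_eN_sub_ite_le (N : ℕ) (ht : 0 ≤ t) :
    |exp (-N * t) * eN N (N * t) - if t ≤ 1 then 1 else 0| ≤ (t * exp (1 - t)) ^ N := by
  rw [← exp_neg_mul_mul_pow_mul_exp, mul_comm (N : ℝ) t]
  have hN : (0 : ℝ) ≤ N := N.cast_nonneg
  split_ifs with ht₁
  · have hexp : exp (-N * t) * exp (t * N) = 1 := by rw [← exp_add]; ring_nf; exact exp_zero
    have key : exp (-N * t) * eN N (t * N) - 1
        = -(exp (-N * t) * (exp (t * N) - eN N (t * N))) := by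
      linear_combination hexp
    rw [key, abs_neg, abs_of_nonneg (mul_nonneg (exp_nonneg _)
      (sub_nonneg.2 (eN_le_exp (by positivity))))]
    gcongr
    exact (exp_sub_eN_mul_le_pow_mul ht ht₁ hN).trans
      (mul_le_mul_of_nonneg_left (sub_le_self _ (eN_nonneg hN)) (by positivity))
  · rw [sub_zero, abs_of_nonneg (mul_nonneg (exp_nonneg _) (eN_nonneg (by positivity)))]
    gcongr
    exact (eN_mul_le_pow_mul (not_le.1 ht₁).le hN).trans
      (mul_le_mul_of_nonneg_left (eN_le_exp hN) (by positivity))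

end TruncatedExp

lemma mul_exp_one_sub_lt_one {t : ℝ} (ht : t ≠ 1) : t * exp (1 - t) < 1 := by
  have h := add_one_lt_exp (sub_ne_zero.2 ht)
  calc t * exp (1 - t) < exp (t - 1) * exp (1 - t) := by gcongr; linarith
    _ = 1 := by rw [← exp_add]; simp

lemma IsCompact.tendstoUniformlyOn_of_dist_le_pow {α β : Type*} [TopologicalSpace α]
    [PseudoMetricSpace β] {F : ℕ → α → β} {f : α → β} {s : Set α} (hs : IsCompact s)
    {g : α → ℝ} (hg : ContinuousOn g s) (hg₀ : ∀ x ∈ s, 0 ≤ g x) (hg₁ : ∀ x ∈ s, g x < 1)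
    (h : ∀ N, ∀ x ∈ s, dist (f x) (F N x) ≤ g x ^ N) : TendstoUniformlyOn F f atTop s := by
  obtain ⟨ρ, hρ₁, hgρ⟩ : ∃ ρ, -1 < ρ ∧ ∀ x ∈ s, ρ ≤ -g x :=
    hs.exists_forall_le' hg.neg fun x hx => neg_lt_neg (hg₁ x hx)
  have hlim := tendsto_pow_atTop_nhds_zero_of_lt_one (le_max_left 0 (-ρ))
    (max_lt one_pos (by linarith))
  rw [Metric.tendstoUniformlyOn_iff]
  intro ε hε
  filter_upwards [hlim.eventually_lt_const hε] with N hN x hx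
  calc dist (f x) (F N x) ≤ g x ^ N := h N x hx
    _ ≤ max 0 (-ρ) ^ N := by
      gcongr
      · exact hg₀ x hx
      · exact le_max_of_le_right (by linarith [hgρ x hx])
    _ < ε := hN

/-- Uniform convergence of `φ^{1,N}` to `π⁻¹𝟙_{|z|≤1}` on compact sets avoiding the unit
circle; equivalently for `e^{-N|z|²}e_N(N|z|²)` and `𝟙_{|z|≤1}`. -/
theorem stmt3 (K : Set ℂ) (hK : IsCompact K) (hK1 : ∀ z ∈ K, ‖z‖ ≠ 1) :
    TendstoUniformlyOn (fun (N : ℕ) (z : ℂ) => phi1C N z)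
      (fun z => if ‖z‖ ≤ 1 then (Real.pi)⁻¹ else 0) atTop K
    ∧ TendstoUniformlyOn
        (fun (N : ℕ) (z : ℂ) =>
          Real.exp (-(N : ℝ) * ‖z‖ ^ 2) * eN N ((N : ℝ) * ‖z‖ ^ 2))
        (fun z => if ‖z‖ ≤ 1 then 1 else 0) atTop K := by
  have hscaled : TendstoUniformlyOn
      (fun (N : ℕ) (z : ℂ) => Real.exp (-(N : ℝ) * ‖z‖ ^ 2) * eN N ((N : ℝ) * ‖z‖ ^ 2))
      (fun z => if ‖z‖ ≤ 1 then 1 else 0) atTop K := by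
    refine hK.tendstoUniformlyOn_of_dist_le_pow (g := fun z => ‖z‖ ^ 2 * exp (1 - ‖z‖ ^ 2))
      (by fun_prop) (fun z _ => by positivity) (fun z hz => mul_exp_one_sub_lt_one ?_)
      fun N z _ => ?_
    · exact (pow_eq_one_iff_of_nonneg (norm_nonneg z) two_ne_zero).not.2 (hK1 z hz)
    · rw [dist_comm, Real.dist_eq]
      simp only [← sq_le_one_iff₀ (norm_nonneg z)]
      exact abs_exp_neg_mul_eN_sub_ite_le N (sq_nonneg _)
  refine ⟨?_, hscaled⟩
  convert (Real.uniformContinuous_const_mul (x := π⁻¹)).comp_tendstoUniformlyOn hscaled using 1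
  · ext N z; simp [phi1C, mul_assoc]
  · ext z; simp
end

section
/- For every N ≥ 1 and every real R ≥ 2, the probability measure on ℝ² with density φ^{1,N} has a sub-Gaussian tail uniformly in N: ∫_{|z| ≥ R} π^{−1} e^{−N|z|²} e_N(N|z|²) dz ≤ 4 e^{−R²/2}. -/
open MeasureTheory Real

/-- One-particle marginal density `φ^{1,N}(z) = π⁻¹ e^{-N|z|²} e_N(N|z|²)` on `ℝ²`. -/
noncomputable def phi1 (N : ℕ) (z : EuclideanSpace ℝ (Fin 2)) : ℝ :=
  (Real.pi)⁻¹ * Real.exp (-(N : ℝ) * ‖z‖ ^ 2) * eN N ((N : ℝ) * ‖z‖ ^ 2)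

/-!
For `t ≥ 1`, bounding each term `(Nt)^ℓ/ℓ!` of `e_N(Nt)` by `t^{N-1} N^ℓ/ℓ!` gives
`e^{-Nt} e_N(Nt) ≤ (t e^{1-t})^N / t ≤ e^{1-t}`, since `t e^{1-t} ≤ 1`.
Hence on `|z| ≥ R ≥ 2` the density is at most `π⁻¹ e^{1-|z|²} ≤ e^{-R²/2} π⁻¹ e^{-|z|²/4}`,
and the last Gaussian has total mass `4`.
-/

lemma eN_nonneg_s17 (N : ℕ) {t : ℝ} (ht : 0 ≤ t) : 0 ≤ eN N t :=
  Finset.sum_nonneg fun _ _ => by positivity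

lemma phi1_nonneg (N : ℕ) (z : EuclideanSpace ℝ (Fin 2)) : 0 ≤ phi1 N z := by
  have := eN_nonneg_s17 N (t := N * ‖z‖ ^ 2) (by positivity)
  unfold phi1
  positivity

lemma eN_mul_le (N : ℕ) {x t : ℝ} (hx : 0 ≤ x) (ht : 1 ≤ t) :
    eN N (x * t) ≤ t ^ (N - 1) * exp x := by
  calc eN N (x * t) ≤ ∑ ℓ ∈ Finset.range N, t ^ (N - 1) * (x ^ ℓ / ℓ.factorial) := by
        refine Finset.sum_le_sum fun ℓ hℓ => ?_
        have hpow : t ^ ℓ ≤ t ^ (N - 1) :=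
          pow_le_pow_right₀ ht (Nat.le_sub_one_of_lt (Finset.mem_range.1 hℓ))
        rw [mul_pow, mul_comm (x ^ ℓ), mul_div_assoc]
        gcongr
    _ = t ^ (N - 1) * ∑ ℓ ∈ Finset.range N, x ^ ℓ / ℓ.factorial :=
        (Finset.mul_sum ..).symm
    _ ≤ t ^ (N - 1) * exp x := by
        gcongr
        exact sum_le_exp_of_nonneg hx N

lemma mul_exp_one_sub_le_one (t : ℝ) : t * exp (1 - t) ≤ 1 := by
  calc t * exp (1 - t) = exp 1 * (t * exp (-t)) := by rw [sub_eq_add_neg, exp_add]; ring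
    _ ≤ exp 1 * exp (-1) := by gcongr; exact mul_exp_neg_le_exp_neg_one t
    _ = 1 := by rw [← exp_add]; simp

lemma exp_neg_mul_mul_eN_le {N : ℕ} (hN : 1 ≤ N) {t : ℝ} (ht : 1 ≤ t) :
    exp (-N * t) * eN N (N * t) ≤ exp (1 - t) := by
  have ht0 : 0 < t := by linarith
  calc exp (-N * t) * eN N (N * t) ≤ exp (-N * t) * (t ^ (N - 1) * exp N) := by
        gcongr
        exact eN_mul_le N (Nat.cast_nonneg N) ht
    _ = (t * exp (1 - t)) ^ N / t := by
        have htN : t ^ N = t ^ (N - 1) * t := by rw [← pow_succ, Nat.sub_add_cancel hN]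
        rw [mul_pow, ← exp_nat_mul, show (N : ℝ) * (1 - t) = N + -N * t by ring, exp_add, htN]
        field_simp
    _ ≤ (t * exp (1 - t)) ^ 1 / t := by
        have := pow_le_pow_of_le_one (by positivity) (mul_exp_one_sub_le_one t) hN
        gcongr
    _ = exp (1 - t) := by field_simp

lemma phi1_le_gaussian {N : ℕ} (hN : 1 ≤ N) {R : ℝ} (hR : 2 ≤ R)
    {z : EuclideanSpace ℝ (Fin 2)} (hz : R ≤ ‖z‖) :
    phi1 N z ≤ exp (-R ^ 2 / 2) * (π⁻¹ * exp (-(1 / 4) * ‖z‖ ^ 2)) := by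
  have hz1 : 1 ≤ ‖z‖ ^ 2 := by nlinarith
  calc phi1 N z = π⁻¹ * (exp (-N * ‖z‖ ^ 2) * eN N (N * ‖z‖ ^ 2)) := by
        unfold phi1; ring
    _ ≤ π⁻¹ * exp (1 - ‖z‖ ^ 2) := by
        gcongr
        exact exp_neg_mul_mul_eN_le hN hz1
    _ ≤ π⁻¹ * exp (-R ^ 2 / 2 + -(1 / 4) * ‖z‖ ^ 2) := by
        gcongr
        nlinarith
    _ = exp (-R ^ 2 / 2) * (π⁻¹ * exp (-(1 / 4) * ‖z‖ ^ 2)) := by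
        rw [exp_add]; ring

lemma integral_exp_neg_mul_sq_norm_of_finrank_eq_two {V : Type*} [NormedAddCommGroup V]
    [InnerProductSpace ℝ V] [FiniteDimensional ℝ V] [MeasurableSpace V] [BorelSpace V]
    (hV : Module.finrank ℝ V = 2) {b : ℝ} (hb : 0 < b) :
    ∫ v : V, exp (-b * ‖v‖ ^ 2) = π / b := by
  rw [GaussianFourier.integral_rexp_neg_mul_sq_norm hb, hV]
  norm_num

/-- Uniform sub-Gaussian tail: `P^{1,N}(|z| ≥ R) ≤ 4 e^{-R²/2}` for all `N ≥ 1`, `R ≥ 2`. -/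
theorem stmt17 (N : ℕ) (hN : 1 ≤ N) (R : ℝ) (hR : 2 ≤ R) :
    ∫ z in {z : EuclideanSpace ℝ (Fin 2) | R ≤ ‖z‖}, phi1 N z
      ≤ 4 * Real.exp (-R ^ 2 / 2) := by
  set S := {z : EuclideanSpace ℝ (Fin 2) | R ≤ ‖z‖}
  set g := fun z : EuclideanSpace ℝ (Fin 2) =>
    exp (-R ^ 2 / 2) * (π⁻¹ * exp (-(1 / 4) * ‖z‖ ^ 2))
  have hg_integral : ∫ z, g z = 4 * exp (-R ^ 2 / 2) := by
    simp only [g, integral_const_mul,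
      integral_exp_neg_mul_sq_norm_of_finrank_eq_two finrank_euclideanSpace_fin (b := 1 / 4)
        (by norm_num)]
    field_simp
  have hg : Integrable g := .of_integral_ne_zero (by rw [hg_integral]; positivity)
  have hS : MeasurableSet S := measurableSet_le measurable_const measurable_norm
  calc ∫ z in S, phi1 N z ≤ ∫ z in S, g z :=
        integral_mono_of_nonneg (ae_of_all _ (phi1_nonneg N)) hg.integrableOn
          ((ae_restrict_iff' hS).2 (ae_of_all _ fun _ hz => phi1_le_gaussian hN hR hz))
    _ ≤ ∫ z, g z := setIntegral_le_integral hg (ae_of_all _ fun _ => by positivity)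
    _ = 4 * exp (-R ^ 2 / 2) := hg_integral
end
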